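/- Define R : ℝ² → ℝ by R(y,z) = ∫₀^z 3(s−z)(s+y)(1+(y+s)²)^{−5/2} ds. Then there exists a constant C > 0 such that for all y, z ∈ ℝ: |∂_z² R(y,z)| ≤ C, |∂_y² R(y,z)| ≤ Cz², |∂_z∂_y R(y,z)| ≤ C|z|, |∂_z³ R(y,z)| ≤ C, and |∂_z²∂_y R(y,z)| ≤ C, where ∂_z denotes differentiation of R in its second argument and ∂_y differentiation in its first argument (the mixed derivatives being iterated partial derivatives). -/

import Mathlib

/-!
Put `ρ u = (1 + u²)^(-1/2)` and `φ₀ u = u ρ u`, so that the integrand of `R` is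
`(z - s) φ₀''(y + s)`. Integrating by parts, `R(y, z) = φ₀(y + z) - φ₀ y - z φ₀' y` is the first
order Taylor remainder of `φ₀` at `y`. Differentiating in `y` replaces `φ₀` by `φ₀'` in this
remainder and differentiating in `z` gives `φ₀'(y + z) - φ₀' y`, so all five derivatives are
values, increments or Taylor remainders of `φ₀''` and `φ₀'''`. These are controlled by bounds on
`φ₀''`, `φ₀'''`, `φ₀''''`, which are polynomials in `u ρ u` and `ρ u`, both of absolute value at
most `1`.
-/

open MeasureTheory

/-- The Taylor remainder function
`R(y,z) = ∫₀^z 3(s-z)(s+y)(1+(y+s)²)^{-5/2} ds`. -/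
noncomputable def Rfun (y z : ℝ) : ℝ :=
  ∫ s in (0 : ℝ)..z, 3 * (s - z) * (s + y) * (1 + (y + s) ^ 2) ^ (-(5 : ℝ) / 2)

/-- `Q(y,z) = ∫₀^z R(y,r) dr`. -/
noncomputable def Qfun (y z : ℝ) : ℝ :=
  ∫ t in (0 : ℝ)..z, Rfun y t

def taylorRem (f f' : ℝ → ℝ) (y z : ℝ) : ℝ := f (y + z) - f y - z * f' y

section TaylorRem

variable {f f' f'' : ℝ → ℝ}

theorem hasDerivAt_taylorRem_right (hf : ∀ x, HasDerivAt f (f' x) x) (y z : ℝ) :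
    HasDerivAt (taylorRem f f' y) (f' (y + z) - f' y) z :=
  (((hf (y + z)).comp_const_add y z).sub_const (f y)).sub (hasDerivAt_mul_const (f' y))

theorem deriv_taylorRem_right (hf : ∀ x, HasDerivAt f (f' x) x) (y : ℝ) :
    deriv (taylorRem f f' y) = fun z => f' (y + z) - f' y :=
  funext fun z => (hasDerivAt_taylorRem_right hf y z).deriv

theorem deriv_taylorRem_left (hf : ∀ x, HasDerivAt f (f' x) x)
    (hf' : ∀ x, HasDerivAt f' (f'' x) x) (z : ℝ) :
    deriv (fun y => taylorRem f f' y z) = fun y => taylorRem f' f'' y z :=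
  funext fun y => ((((hf (y + z)).comp_add_const y z).sub (hf y)).sub ((hf' y).const_mul z)).deriv

theorem abs_sub_le_mul_abs_of_abs_deriv_le (hf : ∀ x, HasDerivAt f (f' x) x) {C : ℝ}
    (hC : ∀ x, |f' x| ≤ C) (y z : ℝ) : |f (y + z) - f y| ≤ C * |z| := by
  simpa using Convex.norm_image_sub_le_of_norm_hasDerivWithin_le
    (fun x _ => (hf x).hasDerivWithinAt) (fun x _ => hC x) convex_univ
    (Set.mem_univ y) (Set.mem_univ (y + z))

theorem abs_taylorRem_le (hf : ∀ x, HasDerivAt f (f' x) x) (hf' : ∀ x, HasDerivAt f' (f'' x) x)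
    {C : ℝ} (hC : ∀ x, |f'' x| ≤ C) (y z : ℝ) : |taylorRem f f' y z| ≤ C * z ^ 2 := by
  have hderiv (t : ℝ) : HasDerivAt (taylorRem f f' y) (f' (y + t) - f' y) t :=
    hasDerivAt_taylorRem_right hf y t
  have hbound : ∀ t ∈ Set.uIcc 0 z, ‖f' (y + t) - f' y‖ ≤ C * |z| := fun t ht =>
    calc |f' (y + t) - f' y| ≤ C * |t| := abs_sub_le_mul_abs_of_abs_deriv_le hf' hC y t
      _ ≤ C * |z| := mul_le_mul_of_nonneg_left (by simpa using Set.abs_sub_left_of_mem_uIcc ht)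
        ((abs_nonneg _).trans (hC 0))
  have := Convex.norm_image_sub_le_of_norm_hasDerivWithin_le
    (fun t _ => (hderiv t).hasDerivWithinAt) hbound (convex_uIcc 0 z)
    Set.left_mem_uIcc Set.right_mem_uIcc
  simpa [taylorRem, sq, mul_assoc] using this

end TaylorRem

noncomputable def ρ (u : ℝ) : ℝ := (1 + u ^ 2) ^ (-(1 : ℝ) / 2)

noncomputable def φ₀ (u : ℝ) : ℝ := u * ρ u
noncomputable def φ₁ (u : ℝ) : ℝ := ρ u ^ 3
noncomputable def φ₂ (u : ℝ) : ℝ := -3 * u * ρ u ^ 5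
noncomputable def φ₃ (u : ℝ) : ℝ := -3 * ρ u ^ 5 + 15 * u ^ 2 * ρ u ^ 7
noncomputable def φ₄ (u : ℝ) : ℝ := 45 * u * ρ u ^ 7 - 105 * u ^ 3 * ρ u ^ 9

section ρ

variable (u : ℝ)

theorem ρ_pow (n : ℕ) : ρ u ^ n = (1 + u ^ 2) ^ (-(n : ℝ) / 2) := by
  rw [ρ, ← Real.rpow_natCast, ← Real.rpow_mul (by positivity)]
  ring_nf

theorem ρ_sq_mul : ρ u ^ 2 * (1 + u ^ 2) = 1 := by
  rw [ρ_pow, ← Real.rpow_add_one (by positivity)]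
  norm_num

theorem ρ_pos : 0 < ρ u := by unfold ρ; positivity

theorem ρ_le_one : ρ u ≤ 1 :=
  Real.rpow_le_one_of_one_le_of_nonpos (by nlinarith) (by norm_num)

theorem abs_mul_ρ_le_one : |u * ρ u| ≤ 1 := by
  rw [← sq_le_one_iff_abs_le_one]
  nlinarith [ρ_sq_mul u, sq_nonneg (ρ u)]

theorem hasDerivAt_ρ : HasDerivAt ρ (-u * ρ u ^ 3) u := by
  refine ((hasDerivAt_pow 2 u).const_add 1 |>.rpow_const (p := -(1 : ℝ) / 2)
    (Or.inl (by positivity))).congr_deriv ?_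
  rw [ρ_pow, show -(1 : ℝ) / 2 - 1 = -((3 : ℕ) : ℝ) / 2 by norm_num]
  push_cast
  ring

end ρ

theorem hasDerivAt_φ₀ (u : ℝ) : HasDerivAt φ₀ (φ₁ u) u := by
  refine ((hasDerivAt_id' u).mul (hasDerivAt_ρ u)).congr_deriv ?_
  rw [φ₁]
  linear_combination -ρ u * ρ_sq_mul u

theorem hasDerivAt_φ₁ (u : ℝ) : HasDerivAt φ₁ (φ₂ u) u := by
  refine ((hasDerivAt_ρ u).pow 3).congr_deriv ?_
  rw [φ₂]
  ring

theorem hasDerivAt_φ₂ (u : ℝ) : HasDerivAt φ₂ (φ₃ u) u := by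
  refine (((hasDerivAt_id' u).const_mul (-3)).mul ((hasDerivAt_ρ u).pow 5)).congr_deriv ?_
  simp only [φ₃, Pi.pow_apply]
  ring

theorem hasDerivAt_φ₃ (u : ℝ) : HasDerivAt φ₃ (φ₄ u) u := by
  refine (((hasDerivAt_ρ u).pow 5 |>.const_mul (-3)).add
    ((hasDerivAt_pow 2 u |>.const_mul 15).mul ((hasDerivAt_ρ u).pow 7))).congr_deriv ?_
  simp only [φ₄, Pi.pow_apply]
  ring

theorem abs_φ₂_le (u : ℝ) : |φ₂ u| ≤ 3 :=
  calc |φ₂ u| = 3 * |u * ρ u| * ρ u ^ 4 := by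
        rw [φ₂, show -3 * u * ρ u ^ 5 = -3 * (u * ρ u) * ρ u ^ 4 by ring, abs_mul, abs_mul,
          abs_of_pos (pow_pos (ρ_pos u) 4)]
        norm_num
    _ ≤ 3 * 1 * 1 := by
        gcongr
        exacts [abs_mul_ρ_le_one u, pow_le_one₀ (ρ_pos u).le (ρ_le_one u)]
    _ = 3 := by norm_num

theorem abs_φ₃_le (u : ℝ) : |φ₃ u| ≤ 18 :=
  calc |φ₃ u| = ρ u ^ 5 * |15 * (u * ρ u) ^ 2 - 3| := by
        rw [φ₃, show -3 * ρ u ^ 5 + 15 * u ^ 2 * ρ u ^ 7 = ρ u ^ 5 * (15 * (u * ρ u) ^ 2 - 3) by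
          ring, abs_mul, abs_of_pos (pow_pos (ρ_pos u) 5)]
    _ ≤ 1 * 18 := by
        have ha := (sq_le_one_iff_abs_le_one _).mpr (abs_mul_ρ_le_one u)
        gcongr
        · exact pow_le_one₀ (ρ_pos u).le (ρ_le_one u)
        · rw [abs_le]; constructor <;> nlinarith [sq_nonneg (u * ρ u)]
    _ = 18 := by norm_num

theorem abs_φ₄_le (u : ℝ) : |φ₄ u| ≤ 150 :=
  calc |φ₄ u| = ρ u ^ 6 * |45 * (u * ρ u) - 105 * (u * ρ u) ^ 3| := by
        rw [φ₄, show 45 * u * ρ u ^ 7 - 105 * u ^ 3 * ρ u ^ 9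
            = ρ u ^ 6 * (45 * (u * ρ u) - 105 * (u * ρ u) ^ 3) by ring, abs_mul,
          abs_of_pos (pow_pos (ρ_pos u) 6)]
    _ ≤ 1 * (45 * 1 + 105 * 1 ^ 3) := by
        have ha := abs_mul_ρ_le_one u
        gcongr
        · exact pow_le_one₀ (ρ_pos u).le (ρ_le_one u)
        · refine (abs_sub _ _).trans ?_
          rw [abs_mul 45, abs_mul 105, abs_pow, abs_of_pos (by norm_num : (0 : ℝ) < 45),
            abs_of_pos (by norm_num : (0 : ℝ) < 105)]
          gcongr
    _ = 150 := by norm_num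

theorem Rfun_eq_taylorRem : Rfun = taylorRem φ₀ φ₁ := by
  ext y z
  have hφ₂ : Continuous φ₂ := continuous_iff_continuousAt.2 fun u => (hasDerivAt_φ₂ u).continuousAt
  have hprimitive (s : ℝ) : HasDerivAt (fun s => (z - s) * φ₁ (y + s) + φ₀ (y + s))
      ((z - s) * φ₂ (y + s)) s := by
    refine ((((hasDerivAt_id' s).const_sub z).mul ((hasDerivAt_φ₁ (y + s)).comp_const_add y s)).add
      ((hasDerivAt_φ₀ (y + s)).comp_const_add y s)).congr_deriv ?_
    ring
  have hintegrand (s : ℝ) : 3 * (s - z) * (s + y) * (1 + (y + s) ^ 2) ^ (-(5 : ℝ) / 2)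
      = (z - s) * φ₂ (y + s) := by
    rw [φ₂, ρ_pow]
    push_cast
    ring
  simp only [Rfun, hintegrand]
  rw [intervalIntegral.integral_eq_sub_of_hasDerivAt (fun s _ => hprimitive s)
    ((by fun_prop : Continuous fun s => (z - s) * φ₂ (y + s)).intervalIntegrable _ _)]
  simp only [taylorRem, sub_zero, add_zero]
  ring

/-- Uniform bounds on the higher partial derivatives of `R`:
`|∂_z² R| ≤ C`, `|∂_y² R| ≤ Cz²`, `|∂_z∂_y R| ≤ C|z|`, `|∂_z³ R| ≤ C`,
`|∂_z²∂_y R| ≤ C`. -/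
theorem stmt14 : ∃ C : ℝ, 0 < C ∧ ∀ y z : ℝ,
    |deriv (fun w => deriv (fun v => Rfun y v) w) z| ≤ C ∧
    |deriv (fun w => deriv (fun v => Rfun v z) w) y| ≤ C * z ^ 2 ∧
    |deriv (fun w => deriv (fun v => Rfun v w) y) z| ≤ C * |z| ∧
    |deriv (fun w => deriv (fun w' => deriv (fun v => Rfun y v) w') w) z| ≤ C ∧
    |deriv (fun w => deriv (fun w' => deriv (fun v => Rfun v w') y) w) z| ≤ C := by
  refine ⟨150, by norm_num, fun y z => ?_⟩
  simp only [Rfun_eq_taylorRem, deriv_taylorRem_left hasDerivAt_φ₀ hasDerivAt_φ₁,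
    deriv_taylorRem_left hasDerivAt_φ₁ hasDerivAt_φ₂, deriv_taylorRem_right hasDerivAt_φ₀,
    deriv_taylorRem_right hasDerivAt_φ₁, deriv_sub_const, deriv_comp_const_add,
    (hasDerivAt_φ₁ _).deriv, (hasDerivAt_φ₂ _).deriv]
  exact ⟨(abs_φ₂_le _).trans (by norm_num),
    abs_taylorRem_le hasDerivAt_φ₂ hasDerivAt_φ₃ abs_φ₄_le y z,
    (abs_sub_le_mul_abs_of_abs_deriv_le hasDerivAt_φ₂ abs_φ₃_le y z).trans (by gcongr; norm_num),
    (abs_φ₃_le _).trans (by norm_num), (abs_φ₃_le _).trans (by norm_num)⟩
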